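/- arXiv:2005.08204 — 2 statements merged into one kernel-verified Lean document; each statement's English description precedes it below -/
import Mathlib

section
/- For 0 < a, b < 1 let X_{a,b} ~ Beta(a, b), whose anti-mode is (a-1)/(a+b-2). Then the map (a, b) ↦ P(X_{a,b} > (a-1)/(a+b-2)) is increasing in a and decreasing in b. -/
/-!
Write `m(a, b) = (1 - a) / ((1 - a) + (1 - b))` for the anti-mode. Raising `a` multiplies the
density by the increasing factor `y ^ (a₂ - a₁)`, so the Beta law moves to the right and its CDF
decreases pointwise; at the same time the anti-mode moves to the left. Both effects lower
`F_{a,b}(m(a,b))`. Raising `b` multiplies the density by the decreasing factor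
`(1 - y) ^ (b₂ - b₁)` and moves the anti-mode to the right, so both effects raise it.
-/

open MeasureTheory Set

/-- Unnormalised incomplete Beta integral: `∫_0^{min x 1} y^(a-1) (1-y)^(b-1) dy`. -/
noncomputable def betaInt (a b x : ℝ) : ℝ :=
  ∫ y in Set.Ioo (0 : ℝ) (min x 1), y ^ (a - 1) * (1 - y) ^ (b - 1)

/-- The CDF of the Beta(a, b) distribution. -/
noncomputable def betaCDF (a b x : ℝ) : ℝ :=
  betaInt a b x / betaInt a b 1

/-- `P(X_{a,b} > (a-1)/(a+b-2))` for `X_{a,b} ~ Beta(a,b)` (the CDF is continuous, so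
the probability of strictly exceeding the anti-mode is `1 - F(mode)`). -/
noncomputable def betaExceedAntimodeProb (a b : ℝ) : ℝ :=
  1 - betaCDF a b ((a - 1) / (a + b - 2))

/-- Monotone likelihood ratio implies first-order stochastic dominance. -/
theorem setIntegral_Ioo_div_le_of_monotoneOn_ratio {f g r : ℝ → ℝ} {l x u : ℝ}
    (hx : x ∈ Ioo l u) (hf : IntegrableOn f (Ioo l u)) (hg : IntegrableOn g (Ioo l u))
    (hf0 : ∀ y ∈ Ioo l u, 0 ≤ f y) (hgf : ∀ y ∈ Ioo l u, g y = r y * f y)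
    (hr : MonotoneOn r (Ioo l u))
    (hF : 0 < ∫ y in Ioo l u, f y) (hG : 0 < ∫ y in Ioo l u, g y) :
    (∫ y in Ioo l x, g y) / (∫ y in Ioo l u, g y)
      ≤ (∫ y in Ioo l x, f y) / ∫ y in Ioo l u, f y := by
  have hA : Ioo l x ⊆ Ioo l u := Ioo_subset_Ioo_right hx.2.le
  have hB : Ico x u ⊆ Ioo l u := fun y hy => ⟨hx.1.trans_le hy.1, hy.2⟩
  have split : ∀ h : ℝ → ℝ, IntegrableOn h (Ioo l u) →
      ∫ y in Ioo l u, h y = (∫ y in Ioo l x, h y) + ∫ y in Ico x u, h y := fun h hh => by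
    rw [← Ioo_union_Ico_eq_Ioo hx.1 hx.2.le, setIntegral_union
      (disjoint_left.2 fun y hy hy' => hy'.1.not_gt hy.2) measurableSet_Ico
      (hh.mono_set hA) (hh.mono_set hB)]
  have head : ∫ y in Ioo l x, g y ≤ r x * ∫ y in Ioo l x, f y := by
    rw [← integral_const_mul]
    refine setIntegral_mono_on (hg.mono_set hA) ((hf.mono_set hA).const_mul _) measurableSet_Ioo
      fun y hy => ?_
    rw [hgf y (hA hy)]
    exact mul_le_mul_of_nonneg_right (hr (hA hy) hx hy.2.le) (hf0 y (hA hy))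
  have tail : r x * ∫ y in Ico x u, f y ≤ ∫ y in Ico x u, g y := by
    rw [← integral_const_mul]
    refine setIntegral_mono_on ((hf.mono_set hB).const_mul _) (hg.mono_set hB) measurableSet_Ico
      fun y hy => ?_
    rw [hgf y (hB hy)]
    exact mul_le_mul_of_nonneg_right (hr hx (hB hy) hy.1) (hf0 y (hB hy))
  have hAf : 0 ≤ ∫ y in Ioo l x, f y :=
    setIntegral_nonneg measurableSet_Ioo fun y hy => hf0 y (hA hy)
  have hBf : 0 ≤ ∫ y in Ico x u, f y :=
    setIntegral_nonneg measurableSet_Ico fun y hy => hf0 y (hB hy)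
  rw [div_le_div_iff₀ hG hF, split f hf, split g hg]
  nlinarith [mul_le_mul_of_nonneg_right head hBf, mul_le_mul_of_nonneg_left tail hAf]

noncomputable def betaDensity (a b y : ℝ) : ℝ := y ^ (a - 1) * (1 - y) ^ (b - 1)

lemma betaDensity_pos {a b y : ℝ} (hy : y ∈ Ioo 0 1) : 0 < betaDensity a b y :=
  mul_pos (Real.rpow_pos_of_pos hy.1 _) (Real.rpow_pos_of_pos (sub_pos.2 hy.2) _)

lemma betaDensity_eq_rpow_mul_left (a₁ a₂ b : ℝ) {y : ℝ} (hy : 0 < y) :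
    betaDensity a₂ b y = y ^ (a₂ - a₁) * betaDensity a₁ b y := by
  rw [betaDensity, betaDensity, ← mul_assoc, ← Real.rpow_add hy]
  ring_nf

lemma betaDensity_eq_rpow_mul_right (a b₁ b₂ : ℝ) {y : ℝ} (hy : y < 1) :
    betaDensity a b₂ y = (1 - y) ^ (b₂ - b₁) * betaDensity a b₁ y := by
  rw [betaDensity, betaDensity, mul_left_comm, ← Real.rpow_add (sub_pos.2 hy)]
  ring_nf

lemma integrableOn_betaDensity {a b : ℝ} (ha : 0 < a) (hb : 0 < b) :
    IntegrableOn (betaDensity a b) (Ioo 0 1) := by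
  have h := Complex.betaIntegral_convergent (u := a) (v := b) (by simpa) (by simpa)
  rw [intervalIntegrable_iff_integrableOn_Ioc_of_le zero_le_one] at h
  have hre : IntegrableOn
      (fun y : ℝ => RCLike.re ((y : ℂ) ^ ((a : ℂ) - 1) * (1 - (y : ℂ)) ^ ((b : ℂ) - 1)))
      (Ioo 0 1) := h.re.mono_measure (Measure.restrict_mono Ioo_subset_Ioc_self le_rfl)
  refine hre.congr_fun (fun y hy => ?_) measurableSet_Ioo
  have h1 : (0 : ℝ) ≤ 1 - y := (sub_pos.2 hy.2).le
  simp only [betaDensity, RCLike.re_to_complex]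
  norm_cast
  rw [← Complex.ofReal_cpow hy.1.le, ← Complex.ofReal_cpow h1]
  norm_cast

lemma integral_betaDensity_pos {a b : ℝ} (ha : 0 < a) (hb : 0 < b) :
    0 < ∫ y in Ioo 0 1, betaDensity a b y := by
  rw [setIntegral_pos_iff_support_of_nonneg_ae
    (ae_restrict_of_forall_mem measurableSet_Ioo fun y hy => (betaDensity_pos hy).le)
    (integrableOn_betaDensity ha hb)]
  calc (0 : ENNReal) < volume (Ioo (0 : ℝ) 1) := by simp
    _ ≤ _ := measure_mono (subset_inter (fun y hy => (betaDensity_pos hy).ne') subset_rfl)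

lemma betaInt_eq {a b x : ℝ} (hx : x ≤ 1) :
    betaInt a b x = ∫ y in Ioo 0 x, betaDensity a b y := by
  rw [betaInt, min_eq_left hx]
  rfl

lemma betaInt_mono {a b : ℝ} (ha : 0 < a) (hb : 0 < b) : Monotone (betaInt a b) := by
  intro x x' hxx
  have hsub : Ioo 0 (min x' 1) ⊆ Ioo 0 1 := Ioo_subset_Ioo_right (min_le_right _ _)
  exact setIntegral_mono_set ((integrableOn_betaDensity ha hb).mono_set hsub)
    (ae_restrict_of_forall_mem measurableSet_Ioo fun y hy => (betaDensity_pos (hsub hy)).le)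
    (Ioo_subset_Ioo_right (min_le_min_right 1 hxx)).eventuallyLE

lemma betaCDF_mono {a b : ℝ} (ha : 0 < a) (hb : 0 < b) : Monotone (betaCDF a b) :=
  fun _ _ hxx => div_le_div_of_nonneg_right (betaInt_mono ha hb hxx)
    (betaInt_eq le_rfl ▸ integral_betaDensity_pos ha hb).le

lemma betaCDF_eq {a b x : ℝ} (hx : x ≤ 1) :
    betaCDF a b x =
      (∫ y in Ioo 0 x, betaDensity a b y) / ∫ y in Ioo 0 1, betaDensity a b y := by
  rw [betaCDF, betaInt_eq hx, betaInt_eq le_rfl]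

lemma betaCDF_anti_left {a₁ a₂ b x : ℝ} (ha₁ : 0 < a₁) (ha : a₁ ≤ a₂) (hb : 0 < b)
    (hx : x ∈ Ioo 0 1) : betaCDF a₂ b x ≤ betaCDF a₁ b x := by
  rw [betaCDF_eq hx.2.le, betaCDF_eq hx.2.le]
  have ha₂ := ha₁.trans_le ha
  exact setIntegral_Ioo_div_le_of_monotoneOn_ratio hx (integrableOn_betaDensity ha₁ hb)
    (integrableOn_betaDensity ha₂ hb) (fun y hy => (betaDensity_pos hy).le)
    (fun y hy => betaDensity_eq_rpow_mul_left a₁ a₂ b hy.1)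
    (fun y hy z _ hyz => Real.rpow_le_rpow hy.1.le hyz (sub_nonneg.2 ha))
    (integral_betaDensity_pos ha₁ hb) (integral_betaDensity_pos ha₂ hb)

lemma betaCDF_mono_right {a b₁ b₂ x : ℝ} (ha : 0 < a) (hb₁ : 0 < b₁) (hb : b₁ ≤ b₂)
    (hx : x ∈ Ioo 0 1) : betaCDF a b₁ x ≤ betaCDF a b₂ x := by
  rw [betaCDF_eq hx.2.le, betaCDF_eq hx.2.le]
  have hb₂ := hb₁.trans_le hb
  exact setIntegral_Ioo_div_le_of_monotoneOn_ratio hx (integrableOn_betaDensity ha hb₂)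
    (integrableOn_betaDensity ha hb₁) (fun y hy => (betaDensity_pos hy).le)
    (fun y hy => betaDensity_eq_rpow_mul_right a b₂ b₁ hy.2)
    (fun y _ z hz hyz => Real.rpow_le_rpow_of_nonpos (sub_pos.2 hz.2) (by linarith)
      (sub_nonpos.2 hb))
    (integral_betaDensity_pos ha hb₂) (integral_betaDensity_pos ha hb₁)

lemma antimode_eq (a b : ℝ) : (a - 1) / (a + b - 2) = (1 - a) / ((1 - a) + (1 - b)) := by
  rw [← neg_div_neg_eq]
  ring_nf

lemma antimode_mem_Ioo {a b : ℝ} (ha : a < 1) (hb : b < 1) :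
    (a - 1) / (a + b - 2) ∈ Ioo 0 1 := by
  rw [antimode_eq]
  exact ⟨div_pos (by linarith) (by linarith), (div_lt_one (by linarith)).2 (by linarith)⟩

lemma antimode_anti_left {a₁ a₂ b : ℝ} (ha : a₁ ≤ a₂) (ha₂ : a₂ < 1) (hb : b < 1) :
    (a₂ - 1) / (a₂ + b - 2) ≤ (a₁ - 1) / (a₁ + b - 2) := by
  rw [antimode_eq, antimode_eq, div_le_div_iff₀ (by linarith) (by linarith)]
  nlinarith

lemma antimode_mono_right {a b₁ b₂ : ℝ} (ha : a < 1) (hb : b₁ ≤ b₂) (hb₂ : b₂ < 1) :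
    (a - 1) / (a + b₁ - 2) ≤ (a - 1) / (a + b₂ - 2) := by
  rw [antimode_eq, antimode_eq, div_le_div_iff₀ (by linarith) (by linarith)]
  nlinarith

/-- Corollary 12 (anti-modes): for `0 < a, b < 1`, `(a,b) ↦ P(X_{a,b} > antimode)` is
increasing in `a` and decreasing in `b`. -/
theorem beta_exceed_antimode_monotone :
    (∀ b a₁ a₂ : ℝ, 0 < b → b < 1 → 0 < a₁ → a₁ ≤ a₂ → a₂ < 1 →
      betaExceedAntimodeProb a₁ b ≤ betaExceedAntimodeProb a₂ b) ∧
    (∀ a b₁ b₂ : ℝ, 0 < a → a < 1 → 0 < b₁ → b₁ ≤ b₂ → b₂ < 1 →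
      betaExceedAntimodeProb a b₂ ≤ betaExceedAntimodeProb a b₁) := by
  constructor
  · intro b a₁ a₂ hb₀ hb₁ ha₁ ha ha₂
    have hm := antimode_mem_Ioo (ha.trans_lt ha₂) hb₁
    refine sub_le_sub_left ?_ 1
    calc betaCDF a₂ b ((a₂ - 1) / (a₂ + b - 2))
        ≤ betaCDF a₂ b ((a₁ - 1) / (a₁ + b - 2)) :=
          betaCDF_mono (ha₁.trans_le ha) hb₀ (antimode_anti_left ha ha₂ hb₁)
      _ ≤ betaCDF a₁ b ((a₁ - 1) / (a₁ + b - 2)) := betaCDF_anti_left ha₁ ha hb₀ hm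
  · intro a b₁ b₂ ha₀ ha₁ hb₁ hb hb₂
    have hm := antimode_mem_Ioo ha₁ (hb.trans_lt hb₂)
    refine sub_le_sub_left ?_ 1
    calc betaCDF a b₁ ((a - 1) / (a + b₁ - 2))
        ≤ betaCDF a b₂ ((a - 1) / (a + b₁ - 2)) := betaCDF_mono_right ha₀ hb₁ hb hm
      _ ≤ betaCDF a b₂ ((a - 1) / (a + b₂ - 2)) :=
          betaCDF_mono ha₀ (hb₁.trans_le hb) (antimode_mono_right ha₁ hb hb₂)
end

section
/- Let P be a positively skewed probability distribution with finite mean m₂ and continuous strictly increasing CDF on its supporting interval. Then there exists a median m₁ of P with m₁ ≤ m₂. -/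
/-!
Write `F` for the cdf of `P` and `T x = F⁻¹(1 - F x)`; positive skewness says exactly that `T` is
convex on the supporting interval `I`. As `F` is continuous, `F(X)` is uniform on `[0, 1]`, hence
so is `1 - F(X) = F(T X)`, and therefore `T X` has the same law as `X`. If `F μ < 1/2` at the mean
`μ`, then `μ` is interior to `I`, and Jensen's inequality gives `T μ ≤ E[T X] = μ`, that is
`1 - F μ ≤ F μ`, a contradiction. So `P(X ≤ μ) ≥ 1/2`, and the median where `F` first reaches `1/2`
lies at or below `μ`.
-/

open MeasureTheory ProbabilityTheory Set

lemma ContinuousOn.aemeasurable_of_ae_mem {α β : Type*} [MeasurableSpace α] [TopologicalSpace α]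
    [OpensMeasurableSpace α] [MeasurableSpace β] [TopologicalSpace β] [BorelSpace β]
    {μ : Measure α} {f : α → β} {s : Set α} (hf : ContinuousOn f s) (hs : MeasurableSet s)
    (h : ∀ᵐ x ∂μ, x ∈ s) : AEMeasurable f μ := by
  simpa only [Measure.restrict_eq_self_of_ae_mem h] using hf.aemeasurable (μ := μ) hs

namespace ConvexOn

variable {s : Set ℝ} {g : ℝ → ℝ}

lemma add_mul_sub_le_of_mem_interior (hg : ConvexOn ℝ s g) {x y : ℝ} (hx : x ∈ interior s)
    (hy : y ∈ s) : g x + derivWithin g (Ioi x) x * (y - x) ≤ g y := by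
  rcases lt_trichotomy y x with hyx | rfl | hxy
  · have h := (hg.slope_le_leftDeriv_of_mem_interior hy hx hyx).trans
      (hg.leftDeriv_le_rightDeriv_of_mem_interior hx)
    rw [slope_def_field, div_le_iff₀ (sub_pos.2 hyx)] at h
    linarith
  · simp
  · have h := hg.rightDeriv_le_slope_of_mem_interior hx hy hxy
    rw [slope_def_field, le_div_iff₀ (sub_pos.2 hxy)] at h
    linarith

theorem map_integral_le_of_mem_interior {α : Type*} [MeasurableSpace α] {μ : Measure α}
    [IsProbabilityMeasure μ] {f : α → ℝ} (hg : ConvexOn ℝ s g) (hfs : ∀ᵐ a ∂μ, f a ∈ s)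
    (hfi : Integrable f μ) (hgi : Integrable (fun a => g (f a)) μ)
    (hmem : ∫ a, f a ∂μ ∈ interior s) :
    g (∫ a, f a ∂μ) ≤ ∫ a, g (f a) ∂μ := by
  set x := ∫ a, f a ∂μ
  set c := derivWithin g (Ioi x) x
  have hdev : Integrable (fun a => c * (f a - x)) μ := (hfi.sub (integrable_const x)).const_mul c
  calc g x = ∫ a, (g x + c * (f a - x)) ∂μ := by
        rw [integral_add (integrable_const _) hdev, integral_const_mul,
          integral_sub hfi (integrable_const x)]
        simp [x]
    _ ≤ ∫ a, g (f a) ∂μ :=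
        integral_mono_ae ((integrable_const _).add hdev) hgi
          (hfs.mono fun a ha => hg.add_mul_sub_le_of_mem_interior hmem ha)

theorem map_integral_le_integral_of_map_eq_self {P : Measure ℝ} [IsProbabilityMeasure P]
    (hg : ConvexOn ℝ s g) (hs : ∀ᵐ x ∂P, x ∈ s) (hint : Integrable id P) (hgm : AEMeasurable g P)
    (hmap : P.map g = P) (hmem : ∫ x, x ∂P ∈ interior s) :
    g (∫ x, x ∂P) ≤ ∫ x, x ∂P := by
  have hgi : Integrable g P := by
    simpa [hmap] using (integrable_map_measure aestronglyMeasurable_id hgm).1 (by rwa [hmap])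
  calc g (∫ x, x ∂P) ≤ ∫ x, g x ∂P := hg.map_integral_le_of_mem_interior hs hint hgi hmem
    _ = ∫ x, x ∂P := by simpa [hmap] using (integral_map hgm aestronglyMeasurable_id).symm

end ConvexOn

namespace ProbabilityTheory

variable {P : Measure ℝ}

lemma Ioo_subset_range_cdf (hF : Continuous (cdf P)) : Ioo 0 1 ⊆ range (cdf P) := fun _ hu =>
  mem_range_of_exists_le_of_exists_ge hF
    ((tendsto_cdf_atBot P).eventually (eventually_le_nhds hu.1)).exists
    ((tendsto_cdf_atTop P).eventually (eventually_ge_nhds hu.2)).exists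

lemma exists_cdf_eq_and_setOf_cdf_le_eq_Iic (hF : Continuous (cdf P)) {u : ℝ} (hu : u < 1)
    (hne : {x | cdf P x ≤ u}.Nonempty) :
    ∃ q, cdf P q = u ∧ {x | cdf P x ≤ u} = Iic q := by
  obtain ⟨b, hb⟩ :=
    ((tendsto_cdf_atTop P).eventually (eventually_gt_nhds hu)).exists_forall_of_atTop
  have hbdd : BddAbove {x | cdf P x ≤ u} :=
    ⟨b, fun x hx => le_of_lt (lt_of_not_ge fun hbx => (hb x hbx).not_ge hx)⟩
  set q := sSup {x | cdf P x ≤ u}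
  have hq : cdf P q ≤ u := (isClosed_le hF continuous_const).csSup_mem hne hbdd
  have hgt : ∀ x, q < x → u < cdf P x := fun x hqx =>
    lt_of_not_ge fun hx => (le_csSup hbdd hx).not_gt hqx
  refine ⟨q, le_antisymm hq ?_, Set.ext fun x => ⟨fun hx => le_csSup hbdd hx,
    fun hx => (monotone_cdf P hx).trans hq⟩⟩
  exact ge_of_tendsto ((hF.tendsto q).mono_left nhdsWithin_le_nhds)
    (eventually_nhdsWithin_of_forall fun x (hx : x ∈ Ioi q) => (hgt x hx).le)

/-- `Function.invFun` picks an arbitrary preimage, so only `cdf P ∘ antitheticMap P` is pinned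
down, and only where `cdf P` lies in `Ioo 0 1`. -/
noncomputable def antitheticMap (P : Measure ℝ) (x : ℝ) : ℝ :=
  Function.invFun (cdf P) (1 - cdf P x)

lemma cdf_antitheticMap (hF : Continuous (cdf P)) {x : ℝ} (hx : cdf P x ∈ Ioo 0 1) :
    cdf P (antitheticMap P x) = 1 - cdf P x :=
  Function.invFun_eq (Ioo_subset_range_cdf hF ⟨sub_pos.2 hx.2, by linarith [hx.1]⟩)

variable [IsProbabilityMeasure P]

lemma nullSingletonClass_of_continuous_cdf (hF : Continuous (cdf P)) : NullSingletonClass P where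
  measure_singleton x := by
    rw [← measure_cdf P, StieltjesFunction.measure_singleton,
      leftLim_eq_of_tendsto ((hF.tendsto x).mono_left nhdsWithin_le_nhds), sub_self,
      ENNReal.ofReal_zero]

lemma measureReal_Ici_eq_one_sub_cdf [NullSingletonClass P] (x : ℝ) :
    P.real (Ici x) = 1 - cdf P x := by
  rw [← compl_Iio, probReal_compl_eq_one_sub measurableSet_Iio, measureReal_congr Iio_ae_eq_Iic,
    cdf_eq_real]

lemma measureReal_setOf_cdf_le (hF : Continuous (cdf P)) {u : ℝ} (hu0 : 0 ≤ u) (hu1 : u ≤ 1) :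
    P.real {x | cdf P x ≤ u} = u := by
  rcases hu1.lt_or_eq with hu1 | rfl
  · rcases {x | cdf P x ≤ u}.eq_empty_or_nonempty with hA | hA
    · have : u ≤ 0 := ge_of_tendsto' (tendsto_cdf_atBot P) fun x =>
        (not_le.1 (eq_empty_iff_forall_notMem.1 hA x)).le
      rw [hA, measureReal_empty]
      exact (le_antisymm this hu0).symm
    · obtain ⟨q, hq, hA⟩ := exists_cdf_eq_and_setOf_cdf_le_eq_Iic hF hu1 hA
      rw [hA, ← cdf_eq_real, hq]
  · simp [cdf_le_one]

lemma measureReal_setOf_cdf_lt (hF : Continuous (cdf P)) {u : ℝ} (hu0 : 0 ≤ u) (hu1 : u ≤ 1) :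
    P.real {x | cdf P x < u} = u := by
  refine le_antisymm ?_ (le_of_forall_lt_imp_le_of_dense fun v hv => ?_)
  · exact (measureReal_mono fun x (hx : cdf P x < u) => hx.le).trans_eq
      (measureReal_setOf_cdf_le hF hu0 hu1)
  · rcases lt_or_ge v 0 with hv0 | hv0
    · exact hv0.le.trans measureReal_nonneg
    · calc v = P.real {x | cdf P x ≤ v} :=
            (measureReal_setOf_cdf_le hF hv0 (hv.le.trans hu1)).symm
        _ ≤ P.real {x | cdf P x < u} :=
            measureReal_mono fun x (hx : cdf P x ≤ v) => hx.trans_lt hv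

lemma ae_cdf_mem_Ioo (hF : Continuous (cdf P)) : ∀ᵐ x ∂P, cdf P x ∈ Ioo 0 1 := by
  have hpos : ∀ᵐ x ∂P, 0 < cdf P x := by
    simpa [ae_iff, measureReal_eq_zero_iff] using measureReal_setOf_cdf_le hF le_rfl zero_le_one
  have hlt : ∀ᵐ x ∂P, cdf P x < 1 := by
    refine (mem_ae_iff_prob_eq_one (measurableSet_lt hF.measurable measurable_const)).2 ?_
    rw [← ofReal_measureReal, measureReal_setOf_cdf_lt hF zero_le_one le_rfl, ENNReal.ofReal_one]
  filter_upwards [hpos, hlt] with x h0 h1 using ⟨h0, h1⟩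

lemma map_eq_self_of_cdf_comp_eq_one_sub (hF : Continuous (cdf P)) {ψ : ℝ → ℝ}
    (hψ : AEMeasurable ψ P) (h : ∀ᵐ x ∂P, cdf P (ψ x) = 1 - cdf P x) : P.map ψ = P := by
  have := Measure.isProbabilityMeasure_map hψ
  refine Measure.eq_of_cdf _ _ (StieltjesFunction.ext fun t => ?_)
  rw [cdf_eq_real, map_measureReal_apply_of_aemeasurable hψ measurableSet_Iic]
  have hv0 : 0 ≤ 1 - cdf P t := sub_nonneg.2 (cdf_le_one P t)
  have hv1 : 1 - cdf P t ≤ 1 := sub_le_self _ (cdf_nonneg P t)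
  apply le_antisymm
  · calc P.real (ψ ⁻¹' Iic t) ≤ P.real {x | cdf P x < 1 - cdf P t}ᶜ := by
          refine ENNReal.toReal_mono (measure_ne_top _ _) (measure_mono_ae ?_)
          filter_upwards [h] with x hx (hxt : ψ x ≤ t)
          show ¬ cdf P x < 1 - cdf P t
          linarith [monotone_cdf P hxt]
      _ = cdf P t := by
          rw [probReal_compl_eq_one_sub (measurableSet_lt hF.measurable measurable_const),
            measureReal_setOf_cdf_lt hF hv0 hv1]
          ring
  · calc cdf P t = P.real {x | cdf P x ≤ 1 - cdf P t}ᶜ := by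
          rw [probReal_compl_eq_one_sub (measurableSet_le hF.measurable measurable_const),
            measureReal_setOf_cdf_le hF hv0 hv1]
          ring
      _ ≤ P.real (ψ ⁻¹' Iic t) := by
          refine ENNReal.toReal_mono (measure_ne_top _ _) (measure_mono_ae ?_)
          filter_upwards [h] with x hx (hxt : ¬ cdf P x ≤ 1 - cdf P t)
          show ψ x ≤ t
          by_contra! htx
          linarith [monotone_cdf P htx.le]

lemma cdf_map_neg [NullSingletonClass P] (x : ℝ) :
    cdf (P.map fun z => -z) x = 1 - cdf P (-x) := by
  have := Measure.isProbabilityMeasure_map (μ := P) measurable_neg.aemeasurable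
  rw [cdf_eq_real, map_measureReal_apply measurable_neg measurableSet_Iic,
    ← measureReal_Ici_eq_one_sub_cdf]
  congr 1
  ext z
  simp

lemma convexOn_antitheticMap [NullSingletonClass P] {I : Set ℝ}
    (h : ConvexOn ℝ ((fun x => -x) '' I)
      (fun x => Function.invFun (cdf P) (cdf (P.map fun z => -z) x))) :
    ConvexOn ℝ I (antitheticMap P) := by
  have hI : (-LinearMap.id : ℝ →ₗ[ℝ] ℝ) ⁻¹' ((fun x => -x) '' I) = I := by
    ext x
    simp
  have hT : (fun x => Function.invFun (cdf P) (cdf (P.map fun z => -z) x)) ∘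
      (-LinearMap.id : ℝ →ₗ[ℝ] ℝ) = antitheticMap P := by
    funext x
    simp [antitheticMap, cdf_map_neg]
  simpa only [hI, hT] using h.comp_linearMap (-LinearMap.id)

lemma mem_interior_of_cdf_mem_Ioo [NullSingletonClass P] {I : Set ℝ} (hI : I.OrdConnected)
    (hPI : P I = 1) {x : ℝ} (hx : cdf P x ∈ Ioo 0 1) : x ∈ interior I := by
  have hIc : P Iᶜ = 0 := by rw [prob_compl_eq_one_sub hI.measurableSet, hPI, tsub_self]
  have hlo : 0 < P (Iio x) := by
    rw [measure_congr Iio_ae_eq_Iic, ← ofReal_cdf]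
    exact ENNReal.ofReal_pos.2 hx.1
  have hhi : 0 < P (Ioi x) := by
    rw [← compl_Iic, prob_compl_eq_one_sub measurableSet_Iic, ← ofReal_cdf]
    exact tsub_pos_of_lt (ENNReal.ofReal_lt_one.2 hx.2)
  obtain ⟨a, hax, haI⟩ := nonempty_of_measure_ne_zero ((measure_inter_conull hIc).trans_ne hlo.ne')
  obtain ⟨b, hxb, hbI⟩ := nonempty_of_measure_ne_zero ((measure_inter_conull hIc).trans_ne hhi.ne')
  exact mem_interior.2 ⟨Ioo a b, fun y hy => hI.out haI hbI ⟨hy.1.le, hy.2.le⟩, isOpen_Ioo, hax, hxb⟩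

lemma cdf_integral_pos (hint : Integrable id P) : 0 < cdf P (∫ x, x ∂P) :=
  ENNReal.ofReal_pos.1 <| (ofReal_cdf P _).trans_gt (measure_le_integral_pos hint)

lemma exists_median_le [NullSingletonClass P] (hF : Continuous (cdf P)) {c : ℝ}
    (hc : 1 / 2 ≤ cdf P c) : ∃ m ≤ c, P (Iic m) ≥ 1 / 2 ∧ P (Ici m) ≥ 1 / 2 := by
  obtain ⟨a, ha⟩ := ((tendsto_cdf_atBot P).eventually (eventually_le_nhds one_half_pos)).exists
  obtain ⟨m, hm, hFm⟩ := intermediate_value_Icc (min_le_right a c) hF.continuousOn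
    ⟨(monotone_cdf P (min_le_left a c)).trans ha, hc⟩
  have hhalf : ENNReal.ofReal (1 / 2) = 1 / 2 := by
    rw [ENNReal.ofReal_div_of_pos two_pos, ENNReal.ofReal_one, ENNReal.ofReal_ofNat]
  refine ⟨m, hm.2, ?_, ?_⟩
  · rw [← ofReal_cdf, hFm, hhalf]
  · rw [← ofReal_measureReal, measureReal_Ici_eq_one_sub_cdf, hFm, sub_half, hhalf]

end ProbabilityTheory

theorem median_le_mean_of_positively_skewed_general
    (P : Measure ℝ) [IsProbabilityMeasure P]
    (I : Set ℝ) (hI : I.OrdConnected) (hPI : P I = 1)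
    (hFc : Continuous (fun x => cdf P x))
    -- finite mean:
    (hint : Integrable id P)
    -- positive skewness: `-X ≤_c X`:
    (hskew : ConvexOn ℝ ((fun x => -x) '' I)
      (fun x => Function.invFun (fun y => cdf P y)
        (cdf (Measure.map (fun z => -z) P) x))) :
    ∃ m₁ : ℝ, P (Set.Iic m₁) ≥ 1 / 2 ∧ P (Set.Ici m₁) ≥ 1 / 2 ∧ m₁ ≤ ∫ x, x ∂P := by
  have := nullSingletonClass_of_continuous_cdf hFc
  have hconv : ConvexOn ℝ I (antitheticMap P) := convexOn_antitheticMap hskew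
  have hae : ∀ᵐ x ∂P, x ∈ interior I :=
    (ae_cdf_mem_Ioo hFc).mono fun x hx => mem_interior_of_cdf_mem_Ioo hI hPI hx
  have hmeas : AEMeasurable (antitheticMap P) P :=
    hconv.continuousOn_interior.aemeasurable_of_ae_mem isOpen_interior.measurableSet hae
  have hmap : P.map (antitheticMap P) = P := map_eq_self_of_cdf_comp_eq_one_sub hFc hmeas <|
    (ae_cdf_mem_Ioo hFc).mono fun x hx => cdf_antitheticMap hFc hx
  suffices h : 1 / 2 ≤ cdf P (∫ x, x ∂P) by
    obtain ⟨m, hm, hIic, hIci⟩ := exists_median_le hFc h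
    exact ⟨m, hIic, hIci, hm⟩
  by_contra! hlt
  have hμ : cdf P (∫ x, x ∂P) ∈ Ioo 0 1 := ⟨cdf_integral_pos hint, by linarith⟩
  have hjensen := hconv.map_integral_le_integral_of_map_eq_self (hae.mono fun _ hx => interior_subset hx)
    hint hmeas hmap (mem_interior_of_cdf_mem_Ioo hI hPI hμ)
  have := monotone_cdf P hjensen
  rw [cdf_antitheticMap hFc hμ] at this
  linarith

/-- Theorem 14 (median–mean): a positively skewed distribution with finite mean
has a median at most as large as its mean. -/
theorem median_le_mean_of_positively_skewed
    (P : Measure ℝ) [IsProbabilityMeasure P]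
    (I : Set ℝ) (hI : I.OrdConnected) (hPI : P I = 1)
    (hFc : Continuous (fun x => cdf P x))
    (hF : StrictMonoOn (fun x => cdf P x) I)
    -- finite mean:
    (hint : Integrable id P)
    -- positive skewness: `-X ≤_c X`:
    (hskew : ConvexOn ℝ ((fun x => -x) '' I)
      (fun x => Function.invFun (fun y => cdf P y)
        (cdf (Measure.map (fun z => -z) P) x))) :
    ∃ m₁ : ℝ, P (Set.Iic m₁) ≥ 1 / 2 ∧ P (Set.Ici m₁) ≥ 1 / 2 ∧ m₁ ≤ ∫ x, x ∂P :=
  median_le_mean_of_positively_skewed_general P I hI hPI hFc hint hskew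
end
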